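/- With K^j_n = L_n(δ_j) as above, for all n ≥ 0 and 0 ≤ j ≤ n one has 0 ≤ K^j_n · K^0_j ≤ K^0_n. -/

import Mathlib

/-!
All `K^j` solve the same linear recursion, whose right-hand side only looks at strictly smaller
indices; only the source term `δ_j` differs. Strong induction therefore gives `K^j ≥ 0`,
`K^j_n = 0` for `n < j` and `K^j_j = 1`. For `n > j` both `K^j_n` and `K^0_n` are the same
nonnegative combination of earlier values, so `K^j_n K^0_j ≤ K^0_n` follows termwise from the
induction hypothesis, the terms with `⌊p_i n⌋ < j` vanishing on the left.
-/

open Finset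

theorem Nat.floor_mul_lt_self {p : ℝ} (hp : p < 1) {n : ℕ} (hn : 1 ≤ n) : ⌊p * n⌋₊ < n := by
  have hn' : (0 : ℝ) < n := by exact_mod_cast hn
  exact (Nat.floor_lt' (by omega)).2 (by nlinarith)

def IsRecSolution {m : ℕ} (b : Fin m → ℝ) (d : Fin m → ℕ → ℕ) (c X : ℕ → ℝ) : Prop :=
  X 0 = c 0 ∧ ∀ n, 1 ≤ n → X n = c n + ∑ i, b i * X (d i n)

namespace IsRecSolution

variable {m : ℕ} {b : Fin m → ℝ} {d : Fin m → ℕ → ℕ} {c X : ℕ → ℝ}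

theorem nonneg (hX : IsRecSolution b d c X) (hb : ∀ i, 0 ≤ b i)
    (hd : ∀ i n, 1 ≤ n → d i n < n) (hc : ∀ n, 0 ≤ c n) (n : ℕ) : 0 ≤ X n := by
  induction n using Nat.strong_induction_on with
  | _ n ih =>
    rcases Nat.eq_zero_or_pos n with rfl | hn
    · exact hX.1 ▸ hc 0
    · rw [hX.2 n hn]
      exact add_nonneg (hc n) <|
        sum_nonneg fun i _ => mul_nonneg (hb i) (ih _ (hd i n hn))

theorem eq_zero_of_lt (hX : IsRecSolution b d c X) (hd : ∀ i n, 1 ≤ n → d i n < n)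
    {N : ℕ} (hc : ∀ n < N, c n = 0) (n : ℕ) (hn : n < N) : X n = 0 := by
  induction n using Nat.strong_induction_on with
  | _ n ih =>
    rcases Nat.eq_zero_or_pos n with rfl | hn1
    · exact hX.1.trans (hc 0 hn)
    · rw [hX.2 n hn1, hc n hn, zero_add]
      exact sum_eq_zero fun i _ => by
        rw [ih _ (hd i n hn1) ((hd i n hn1).trans hn), mul_zero]

theorem apply_self_of_single (hd : ∀ i n, 1 ≤ n → d i n < n) {j : ℕ}
    (hX : IsRecSolution b d (fun n => if n = j then 1 else 0) X) : X j = 1 := by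
  rcases Nat.eq_zero_or_pos j with rfl | hj
  · simpa using hX.1
  · rw [hX.2 j hj]
    dsimp only
    rw [if_pos rfl, add_eq_left]
    refine sum_eq_zero fun i _ => ?_
    rw [hX.eq_zero_of_lt hd (fun n hn => if_neg hn.ne) _ (hd i j hj), mul_zero]

theorem mul_apply_le_of_single (hb : ∀ i, 0 ≤ b i) (hd : ∀ i n, 1 ≤ n → d i n < n) {j : ℕ}
    {Y : ℕ → ℝ} (hX : IsRecSolution b d (fun n => if n = j then 1 else 0) X)
    (hY : IsRecSolution b d (fun n => if n = 0 then 1 else 0) Y) (n : ℕ) (hjn : j ≤ n) :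
    X n * Y j ≤ Y n := by
  induction n using Nat.strong_induction_on with
  | _ n ih =>
    rcases hjn.eq_or_lt with rfl | hlt
    · rw [hX.apply_self_of_single hd, one_mul]
    have hn : 1 ≤ n := by omega
    have hY_nonneg := hY.nonneg hb hd fun n => by split_ifs <;> norm_num
    rw [hX.2 n hn, hY.2 n hn]
    dsimp only
    rw [if_neg hlt.ne', zero_add, if_neg (by omega), zero_add, sum_mul]
    refine sum_le_sum fun i _ => ?_
    rw [mul_assoc]
    refine mul_le_mul_of_nonneg_left ?_ (hb i)
    rcases le_or_gt j (d i n) with hle | hgt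
    · exact ih _ (hd i n hn) hle
    · rw [hX.eq_zero_of_lt hd (fun n hn => if_neg hn.ne) _ hgt, zero_mul]
      exact hY_nonneg _

end IsRecSolution

theorem stmt_8_general (m : ℕ) (b p : Fin m → ℝ)
    (hb : ∀ i, 0 ≤ b i) (hp : ∀ i, p i ∈ Set.Ioo (0 : ℝ) 1)
    (K : ℕ → ℕ → ℝ)
    (hK0 : ∀ j, K j 0 = if (0 : ℕ) = j then 1 else 0)
    (hKrec : ∀ j, ∀ n : ℕ, 1 ≤ n →
      K j n = (if n = j then 1 else 0) + ∑ i, b i * K j ⌊p i * n⌋₊) :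
    ∀ n j : ℕ, j ≤ n → 0 ≤ K j n * K 0 j ∧ K j n * K 0 j ≤ K 0 n := by
  intro n j hjn
  have hd : ∀ i (n : ℕ), 1 ≤ n → ⌊p i * n⌋₊ < n := fun i _ hn => Nat.floor_mul_lt_self (hp i).2 hn
  have hK : ∀ j, IsRecSolution b (fun i n => ⌊p i * n⌋₊) (fun n => if n = j then 1 else 0) (K j) :=
    fun j => ⟨hK0 j, hKrec j⟩
  have hK_nonneg : ∀ j n, 0 ≤ K j n := fun j =>
    (hK j).nonneg hb hd fun n => by split_ifs <;> norm_num
  exact ⟨mul_nonneg (hK_nonneg j n) (hK_nonneg 0 j),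
    IsRecSolution.mul_apply_le_of_single hb hd (hK j) (hK 0) n hjn⟩

theorem stmt_8 (m : ℕ) (hm : 1 ≤ m) (b p : Fin m → ℝ)
    (hb : ∀ i, 0 ≤ b i) (hp : ∀ i, p i ∈ Set.Ioo (0 : ℝ) 1)
    (K : ℕ → ℕ → ℝ)
    (hK0 : ∀ j, K j 0 = if (0 : ℕ) = j then 1 else 0)
    (hKrec : ∀ j, ∀ n : ℕ, 1 ≤ n →
      K j n = (if n = j then 1 else 0) + ∑ i, b i * K j ⌊p i * n⌋₊)
    (hKpos : ∀ j, 0 < K 0 j) :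
    ∀ n j : ℕ, j ≤ n → 0 ≤ K j n * K 0 j ∧ K j n * K 0 j ≤ K 0 n :=
  stmt_8_general m b p hb hp K hK0 hKrec
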